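/- For a solution ψ of the dipole equation B ψ = q with q_r = Q > 0, q_s = -Q, q_n = 0 otherwise, the potential drop across any edge is bounded by the drop from r to s: |ψ_m - ψ_n| ≤ ψ_r - ψ_s for every edge (m,n). -/

import Mathlib

open Matrix BigOperators

/-- The weighted Laplacian of a weight function `w` on `Fin N`. -/
def lapMat {N : ℕ} (w : Fin N → Fin N → ℝ) : Matrix (Fin N) (Fin N) ℝ :=
  fun i j => if i = j then ∑ k, w i k else - w i j

/-- Symmetric, nonnegative weights with zero diagonal. -/
def IsWeight {N : ℕ} (w : Fin N → Fin N → ℝ) : Prop :=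
  (∀ i j, w i j = w j i) ∧ (∀ i j, 0 ≤ w i j) ∧ (∀ i, w i i = 0)

/-- The simple graph whose edges are the pairs with nonzero weight. -/
def wGraph {N : ℕ} (w : Fin N → Fin N → ℝ) : SimpleGraph (Fin N) where
  Adj i j := i ≠ j ∧ (w i j ≠ 0 ∨ w j i ≠ 0)
  symm := ⟨fun i j ⟨h1, h2⟩ => ⟨h1.symm, h2.symm⟩⟩
  loopless := ⟨fun i h => h.1 rfl⟩

/-- The dipole vector `ν_rs`: `+1` at `r`, `-1` at `s`, `0` elsewhere. -/
def dipole {N : ℕ} (r s : Fin N) : Fin N → ℝ :=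
  fun i => (if i = r then (1:ℝ) else 0) - (if i = s then (1:ℝ) else 0)

/-- `Bd` is the Moore-Penrose pseudoinverse of `B` (the four Penrose axioms). -/
def IsMoorePenrose {N : ℕ} (B Bd : Matrix (Fin N) (Fin N) ℝ) : Prop :=
  B * Bd * B = B ∧ Bd * B * Bd = Bd ∧ (B * Bd)ᵀ = B * Bd ∧ (Bd * B)ᵀ = Bd * B

/-- The locality factor `η(r,s) = b_rs ν_rs^T B^† ν_rs`. -/
def eta {N : ℕ} (w : Fin N → Fin N → ℝ) (Bdag : Matrix (Fin N) (Fin N) ℝ)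
    (r s : Fin N) : ℝ :=
  w r s * (dipole r s ⬝ᵥ Bdag.mulVec (dipole r s))

/-! The Laplacian `B` obeys the discrete maximum principle: a potential with `(B ψ) i ≤ 0` at
every vertex but `r` cannot have a strict maximum away from `r`, because at a maximiser
`(B ψ) i = ∑ₖ w i k (ψ i - ψ k)` is a sum of nonnegative terms, forcing every neighbour to be a
maximiser too, and connectedness carries this to `r`. Applied to `ψ` and `-ψ` for the dipole
charge, `ψ` takes all its values in `[ψ s, ψ r]`. -/

theorem SimpleGraph.Reachable.mem_of_adj_mem {V : Type*} {G : SimpleGraph V} {S : Set V}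
    (hS : ∀ ⦃i j⦄, G.Adj i j → i ∈ S → j ∈ S) {u v : V} (h : G.Reachable u v) (hu : u ∈ S) :
    v ∈ S := by
  rw [SimpleGraph.reachable_iff_reflTransGen] at h
  induction h with
  | refl => exact hu
  | tail _ hadj ih => exact hS hadj ih

section MaximumPrinciple

variable {N : ℕ} {w : Fin N → Fin N → ℝ}

theorem lapMat_eq_diagonal_sub (hdiag : ∀ i, w i i = 0) :
    lapMat w = diagonal (fun i => ∑ k, w i k) - of w := by
  ext i j
  by_cases h : i = j
  · subst h; simp [lapMat, hdiag]
  · simp [lapMat, h]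

theorem lapMat_mulVec_apply (hdiag : ∀ i, w i i = 0) (ψ : Fin N → ℝ) (i : Fin N) :
    (lapMat w *ᵥ ψ) i = ∑ k, w i k * (ψ i - ψ k) := by
  rw [lapMat_eq_diagonal_sub hdiag, sub_mulVec, Pi.sub_apply, mulVec_diagonal]
  simp [mulVec, dotProduct, mul_sub, Finset.sum_mul]

theorem eq_of_adj_of_forall_le_of_lapMat_mulVec_nonpos (hw : IsWeight w) {ψ : Fin N → ℝ}
    {i j : Fin N} (hmax : ∀ k, ψ k ≤ ψ i) (hi : (lapMat w *ᵥ ψ) i ≤ 0)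
    (hij : (wGraph w).Adj i j) : ψ j = ψ i := by
  obtain ⟨hsymm, hnonneg, hdiag⟩ := hw
  have hterms : ∀ k ∈ Finset.univ, 0 ≤ w i k * (ψ i - ψ k) :=
    fun k _ => mul_nonneg (hnonneg i k) (sub_nonneg.2 (hmax k))
  have hsum : ∑ k, w i k * (ψ i - ψ k) = 0 :=
    le_antisymm (lapMat_mulVec_apply hdiag ψ i ▸ hi) (Finset.sum_nonneg hterms)
  have hwij : w i j ≠ 0 := hij.2.elim id (hsymm i j ▸ ·)
  have hj := (Finset.sum_eq_zero_iff_of_nonneg hterms).1 hsum j (Finset.mem_univ j)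
  linarith [(mul_eq_zero.1 hj).resolve_left hwij]

theorem le_of_lapMat_mulVec_nonpos (hw : IsWeight w) (hconn : (wGraph w).Preconnected)
    {ψ : Fin N → ℝ} (r : Fin N) (hsub : ∀ i, i ≠ r → (lapMat w *ᵥ ψ) i ≤ 0) :
    ∀ i, ψ i ≤ ψ r := by
  have : Nonempty (Fin N) := ⟨r⟩
  obtain ⟨m, hm⟩ := Finite.exists_max ψ
  by_contra! hlt
  have hr : ψ r < ψ m := let ⟨i, hi⟩ := hlt; hi.trans_le (hm i)
  have hclosed : ∀ ⦃i j⦄, (wGraph w).Adj i j → i ∈ {k | ψ k = ψ m} → j ∈ {k | ψ k = ψ m} := by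
    intro i j hij (hi : ψ i = ψ m)
    have hir : i ≠ r := by rintro rfl; exact hr.ne hi
    exact (eq_of_adj_of_forall_le_of_lapMat_mulVec_nonpos hw (hi ▸ hm) (hsub i hir) hij).trans hi
  exact hr.ne ((hconn m r).mem_of_adj_mem hclosed rfl)

theorem le_of_lapMat_mulVec_nonneg (hw : IsWeight w) (hconn : (wGraph w).Preconnected)
    {ψ : Fin N → ℝ} (s : Fin N) (hsup : ∀ i, i ≠ s → 0 ≤ (lapMat w *ᵥ ψ) i) :
    ∀ i, ψ s ≤ ψ i := by
  have h := le_of_lapMat_mulVec_nonpos hw hconn (ψ := -ψ) s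
    (fun i hi => by simpa [mulVec_neg] using hsup i hi)
  simpa using h

end MaximumPrinciple

theorem potential_drop_bounded_by_dipole_drop {N : ℕ} (w : Fin N → Fin N → ℝ)
    (hw : IsWeight w) (hconn : (wGraph w).Connected)
    (r s : Fin N) (Q : ℝ) (hQ : 0 < Q) (q ψ : Fin N → ℝ)
    (hq : (lapMat w).mulVec ψ = q)
    (hqr : q r = Q) (hqs : q s = - Q) (hq0 : ∀ n, n ≠ r → n ≠ s → q n = 0) :
    ∀ m n, (wGraph w).Adj m n → |ψ m - ψ n| ≤ ψ r - ψ s := by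
  have hmax : ∀ i, ψ i ≤ ψ r := by
    refine le_of_lapMat_mulVec_nonpos hw hconn.preconnected r fun i hir => ?_
    rw [hq]
    by_cases his : i = s
    · rw [his, hqs]; linarith
    · rw [hq0 i hir his]
  have hmin : ∀ i, ψ s ≤ ψ i := by
    refine le_of_lapMat_mulVec_nonneg hw hconn.preconnected s fun i his => ?_
    rw [hq]
    by_cases hir : i = r
    · rw [hir, hqr]; linarith
    · rw [hq0 i hir his]
  intro m n _
  rw [abs_sub_le_iff]
  constructor <;> linarith [hmax m, hmax n, hmin m, hmin n]
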